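/- Let C be cyclic of order 2^n, n ≥ 3, with the involution ⊛ induced by a ↦ a^{2^{n-1}-1}. The unit 1 + Ĉ (where Ĉ is the sum of all elements of C) does not belong to the image W_⊛(C) of the map x ↦ x^⊛ x^{-1} on V(F_2 C). -/

import Mathlib

open MonoidAlgebra Finset

noncomputable section

/-- The cyclic group of order `2^n`, written multiplicatively. -/
abbrev Cgrp (n : ℕ) : Type := Multiplicative (ZMod (2 ^ n))

/-- The group algebra `F₂C` of the cyclic group of order `2^n` over the field of two elements. -/
abbrev FC (n : ℕ) : Type := MonoidAlgebra (ZMod 2) (Cgrp n)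

/-- The augmentation map `χ : F₂C → F₂`. -/
def aug (n : ℕ) : FC n →ₐ[ZMod 2] ZMod 2 :=
  MonoidAlgebra.lift (ZMod 2) (ZMod 2) (Cgrp n) 1

/-- The generator `a` of the cyclic group `C`. -/
def agen (n : ℕ) : Cgrp n := Multiplicative.ofAdd (1 : ZMod (2 ^ n))

/-- The generator `a` viewed inside the group algebra `F₂C`. -/
def A (n : ℕ) : FC n := MonoidAlgebra.of (ZMod 2) (Cgrp n) (agen n)

/-- Group elements of `C` as elements of the group algebra. -/
def Gel (n : ℕ) (i : ZMod (2 ^ n)) : FC n :=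
  MonoidAlgebra.of (ZMod 2) (Cgrp n) (Multiplicative.ofAdd i)

/-- The involution `*` of `F₂C` induced by `a ↦ a⁻¹`. -/
def starOne (n : ℕ) : FC n ≃ₐ[ZMod 2] FC n :=
  MonoidAlgebra.domCongr (ZMod 2) (ZMod 2) (MulEquiv.inv (Cgrp n))

/-- The scalar `2^(n-1) - 1` in `ZMod (2^n)`. -/
def cf (n : ℕ) : ZMod (2 ^ n) := 2 ^ (n - 1) - 1

lemma two_pow_zmod (n : ℕ) : ((2 : ZMod (2 ^ n))) ^ n = 0 := by
  have h : ((2 ^ n : ℕ) : ZMod (2 ^ n)) = 0 := ZMod.natCast_self _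
  push_cast at h
  exact h

lemma cf_sq (n : ℕ) (hn : 2 ≤ n) : cf n * cf n = 1 := by
  have h0 := two_pow_zmod n
  have e1 : (2 : ZMod (2 ^ n)) ^ (n - 1) * 2 ^ (n - 1) = 0 := by
    rw [← pow_add]
    have h : n - 1 + (n - 1) = n + (n - 2) := by omega
    rw [h, pow_add, h0, zero_mul]
  have e2 : (2 : ZMod (2 ^ n)) * 2 ^ (n - 1) = 0 := by
    have h : (2 : ZMod (2 ^ n)) * 2 ^ (n - 1) = 2 ^ (n - 1 + 1) := (pow_succ' 2 (n-1)).symm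
    rw [h]
    have h' : n - 1 + 1 = n := by omega
    rw [h', h0]
  have key : cf n * cf n = 2 ^ (n - 1) * 2 ^ (n - 1) - 2 * 2 ^ (n - 1) + 1 := by
    unfold cf; ring
  rw [key, e1, e2]; ring

/-- The automorphism `z ↦ (2^(n-1)-1)·z` of `ZMod (2^n)`. -/
def thetaAdd (n : ℕ) (hn : 2 ≤ n) : ZMod (2 ^ n) ≃+ ZMod (2 ^ n) where
  toFun z := cf n * z
  invFun z := cf n * z
  left_inv z := by show cf n * (cf n * z) = z; rw [← mul_assoc, cf_sq n hn, one_mul]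
  right_inv z := by show cf n * (cf n * z) = z; rw [← mul_assoc, cf_sq n hn, one_mul]
  map_add' x y := mul_add _ _ _

/-- The automorphism `a ↦ a^(2^(n-1)-1)` of `C`. -/
def theta (n : ℕ) (hn : 2 ≤ n) : Cgrp n ≃* Cgrp n :=
  AddEquiv.toMultiplicative (thetaAdd n hn)

/-- The involution `⊛` of `F₂C` induced by `a ↦ a^(2^(n-1)-1)`. -/
def starTwo (n : ℕ) (hn : 2 ≤ n) : FC n ≃ₐ[ZMod 2] FC n :=
  MonoidAlgebra.domCongr (ZMod 2) (ZMod 2) (theta n hn)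

/-- The group `V(F₂C)` of normalized units, as a subgroup of the unit group of `F₂C`. -/
def Vgrp (n : ℕ) : Subgroup (FC n)ˣ where
  carrier := {u | aug n (↑u : FC n) = 1}
  one_mem' := by simp [Set.mem_setOf_eq]
  mul_mem' := by
    intro u v hu hv
    simp only [Set.mem_setOf_eq, Units.val_mul, map_mul] at *
    rw [hu, hv, one_mul]
  inv_mem' := by
    intro u hu
    simp only [Set.mem_setOf_eq] at *
    have h : aug n ((↑u : FC n) * (↑u⁻¹ : FC n)) = 1 := by
      rw [Units.mul_inv, map_one]
    rw [map_mul, hu, one_mul] at h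
    exact h

/-- The sum `Ĉ` of all elements of `C` inside the group algebra. -/
def hatC (n : ℕ) : FC n := ∑ g : Cgrp n, MonoidAlgebra.of (ZMod 2) (Cgrp n) g

/-- The sum `Ĉ²` of all elements of the subgroup `C²` of squares. -/
def hatCsq (n : ℕ) : FC n :=
  ∑ g ∈ Finset.image (fun h : Cgrp n => h * h) Finset.univ,
    MonoidAlgebra.of (ZMod 2) (Cgrp n) g

/-- The subspace `F₂C²` of `F₂C` spanned by the subgroup of squares. -/
def sqSpan (n : ℕ) : Submodule (ZMod 2) (FC n) :=
  Submodule.span (ZMod 2) (Set.range fun g : Cgrp n => MonoidAlgebra.of (ZMod 2) (Cgrp n) (g * g))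

lemma hatC_mul_hatC (n : ℕ) (hn : 1 ≤ n) : hatC n * hatC n = 0 := by
  classical
  unfold hatC
  rw [Finset.sum_mul_sum]
  have h1 : ∀ g : Cgrp n,
      ∑ h : Cgrp n, MonoidAlgebra.of (ZMod 2) (Cgrp n) g * MonoidAlgebra.of (ZMod 2) (Cgrp n) h
        = hatC n := by
    intro g
    have h2 : ∀ h : Cgrp n,
        MonoidAlgebra.of (ZMod 2) (Cgrp n) g * MonoidAlgebra.of (ZMod 2) (Cgrp n) h
          = MonoidAlgebra.of (ZMod 2) (Cgrp n) (g * h) := by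
      intro h; rw [map_mul]
    unfold hatC
    calc ∑ h : Cgrp n, MonoidAlgebra.of (ZMod 2) (Cgrp n) g * MonoidAlgebra.of (ZMod 2) (Cgrp n) h
        = ∑ h : Cgrp n, MonoidAlgebra.of (ZMod 2) (Cgrp n) (g * h) := by
          exact Finset.sum_congr rfl fun h _ => h2 h
      _ = ∑ h : Cgrp n, MonoidAlgebra.of (ZMod 2) (Cgrp n) h :=
          Fintype.sum_equiv (Equiv.mulLeft g) _ _ (fun h => rfl)
  calc (∑ g : Cgrp n, ∑ h : Cgrp n,
        MonoidAlgebra.of (ZMod 2) (Cgrp n) g * MonoidAlgebra.of (ZMod 2) (Cgrp n) h)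
      = ∑ _g : Cgrp n, hatC n := Finset.sum_congr rfl fun g _ => h1 g
    _ = (Fintype.card (Cgrp n)) • hatC n := by rw [Finset.sum_const, Finset.card_univ]
    _ = 0 := by
        rw [← Nat.cast_smul_eq_nsmul (ZMod 2)]
        have hc : ((Fintype.card (Cgrp n) : ℕ) : ZMod 2) = 0 := by
          have : Fintype.card (Cgrp n) = 2 ^ n := by simp [Cgrp, ZMod.card]
          rw [this]
          push_cast
          rw [show ((2:ZMod 2) = 0) from rfl, zero_pow (by omega)]
        rw [hc, zero_smul]

lemma add_self_FC (n : ℕ) (x : FC n) : x + x = 0 := by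
  rw [← two_smul (ZMod 2) x, show ((2:ZMod 2) = 0) from rfl, zero_smul]

/-- `1 + Ĉ` as a unit of `F₂C` (it is its own inverse). -/
def uC (n : ℕ) (hn : 1 ≤ n) : (FC n)ˣ :=
  ⟨1 + hatC n, 1 + hatC n, by
    have h : (1 + hatC n) * (1 + hatC n) = 1 + (hatC n + hatC n) + hatC n * hatC n := by ring
    rw [h, add_self_FC, hatC_mul_hatC n hn, add_zero, add_zero], by
    have h : (1 + hatC n) * (1 + hatC n) = 1 + (hatC n + hatC n) + hatC n * hatC n := by ring
    rw [h, add_self_FC, hatC_mul_hatC n hn, add_zero, add_zero]⟩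

/-!
If `x^⊛ x⁻¹ = 1 + Ĉ`, then `x^⊛ = x + Ĉ x = x + χ(x) Ĉ = x + Ĉ`. Since `⊛` is induced by a group
automorphism, it preserves the coefficient of the identity, whereas `Ĉ` has coefficient `1` there.
-/

namespace MonoidAlgebra

variable {k G : Type*} [CommSemiring k] [Group G]

theorem coeff_domCongr_one {H : Type*} [Group H] (e : G ≃* H) (x : MonoidAlgebra k G) :
    (domCongr k k e x).coeff 1 = x.coeff 1 := by
  rw [coeff_domCongr, map_one]

variable [Fintype G]

theorem sum_of_mul_of (g : G) : (∑ h : G, of k G h) * of k G g = ∑ h : G, of k G h := by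
  simp_rw [Finset.sum_mul, ← map_mul]
  exact Fintype.sum_equiv (Equiv.mulRight g) _ _ fun _ => rfl

theorem sum_of_mul (y : MonoidAlgebra k G) :
    (∑ h : G, of k G h) * y = lift k k G 1 y • ∑ h : G, of k G h := by
  induction y using MonoidAlgebra.induction_on with
  | of g => rw [sum_of_mul_of, lift_of, MonoidHom.one_apply, one_smul]
  | add y z hy hz => rw [mul_add, hy, hz, map_add, add_smul]
  | smul r y hy => rw [mul_smul_comm, hy, map_smul, smul_assoc]

theorem coeff_sum_of (g : G) : (∑ h : G, of k G h).coeff g = 1 := by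
  simp [coeff_sum, of_apply]

end MonoidAlgebra

/-- For `C` cyclic of order `2^n`, `n ≥ 3`, the unit `1 + Ĉ` does not belong to the image
`W_⊛(C) = { x^⊛ x⁻¹ : x ∈ V(F₂C) }`. -/
theorem stmt8 (n : ℕ) (hn : 3 ≤ n) :
    ∀ x : (FC n)ˣ, aug n (↑x : FC n) = 1 →
      starTwo n (by omega) (↑x : FC n) * (↑x⁻¹ : FC n) ≠ 1 + hatC n := by
  intro x hx hW
  have hstar : starTwo n (by omega) (↑x : FC n) = ↑x + hatC n :=
    calc starTwo n (by omega) (↑x : FC n)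
        = starTwo n (by omega) (↑x : FC n) * (↑x⁻¹ : FC n) * ↑x :=
          (Units.inv_mul_cancel_right _ x).symm
      _ = ↑x + hatC n * ↑x := by rw [hW, add_mul, one_mul]
      _ = ↑x + hatC n := by rw [hatC, sum_of_mul, ← aug, hx, one_smul]
  have hcoeff := congrArg (fun y : FC n => y.coeff 1) hstar
  rw [starTwo, coeff_domCongr_one, coeff_add, Finsupp.add_apply, hatC, coeff_sum_of] at hcoeff
  exact one_ne_zero (left_eq_add.mp hcoeff)

end
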